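/- arXiv:math/0112174 — 2 statements merged into one kernel-verified Lean document; each statement's English description precedes it below -/
import Mathlib

section
/- There exists a function h, holomorphic on the half-plane {s ∈ ℂ : Re s > −1/2}, such that h(s) = Γ(s + 1/2)/(4s√π) − Γ(s)/4 for every s in that half-plane with s ≠ 0, and h(0) = −(ln 2)/2. -/
/-!
Put `g(s) = Γ(s + 1/2)/√π − Γ(s + 1)`, which is holomorphic on `Re s > −1/2` and vanishes at
`0` since `Γ(1/2) = √π`. As `Γ(s + 1) = s Γ(s)`, the function in question is `g(s)/(4s)`, so it
extends holomorphically across `0` with value `g'(0)/4`. Finally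
`g'(0) = Γ'(1/2)/√π − Γ'(1) = −(γ + 2 log 2) + γ = −2 log 2`.
-/

open Complex

theorem Complex.differentiableAt_Gamma_of_re_pos {s : ℂ} (hs : 0 < s.re) :
    DifferentiableAt ℂ Gamma s := by
  refine differentiableAt_Gamma s fun m hm => ?_
  have := congrArg re hm
  simp only [neg_re, natCast_re] at this
  linarith [m.cast_nonneg (α := ℝ)]

theorem exists_differentiableOn_eq_div_sub {U : Set ℂ} {f : ℂ → ℂ} {c a : ℂ}
    (hU : U ∈ nhds c) (hf : DifferentiableOn ℂ f U) (hfc : f c = 0)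
    (hf' : HasDerivAt f a c) :
    ∃ h : ℂ → ℂ, DifferentiableOn ℂ h U ∧ (∀ s ∈ U, s ≠ c → h s = f s / (s - c)) ∧ h c = a := by
  refine ⟨dslope f c, (differentiableOn_dslope hU).2 hf, fun s _ hs => ?_, by
    rw [dslope_same, hf'.deriv]⟩
  rw [dslope_of_ne _ hs, slope_def_field, hfc, sub_zero]

theorem sqrt_pi_ne_zero : (Real.sqrt Real.pi : ℂ) ≠ 0 :=
  ofReal_ne_zero.2 (Real.sqrt_ne_zero'.2 Real.pi_pos)

theorem differentiableOn_Gamma_add_half_div_sqrt_pi_sub_Gamma_add_one :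
    DifferentiableOn ℂ (fun s : ℂ => Gamma (s + 1/2) / (Real.sqrt Real.pi : ℂ) - Gamma (s + 1))
      {s : ℂ | -1/2 < s.re} := by
  intro s (hs : -1/2 < s.re)
  have hhalf : DifferentiableAt ℂ Gamma (s + 1/2) :=
    differentiableAt_Gamma_of_re_pos (by simp; linarith)
  have hone : DifferentiableAt ℂ Gamma (s + 1) :=
    differentiableAt_Gamma_of_re_pos (by simp; linarith)
  exact (((hhalf.comp s (by fun_prop)).div_const _).sub
    (hone.comp s (by fun_prop))).differentiableWithinAt

theorem Gamma_add_half_div_sqrt_pi_sub_Gamma_add_one_zero :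
    Gamma (0 + 1/2) / (Real.sqrt Real.pi : ℂ) - Gamma (0 + 1) = 0 := by
  rw [zero_add, zero_add, Gamma_one, show (1/2 : ℂ) = ((1/2 : ℝ) : ℂ) by push_cast; rfl,
    Gamma_ofReal, Real.Gamma_one_half_eq, div_self sqrt_pi_ne_zero, sub_self]

theorem hasDerivAt_Gamma_add_half_div_sqrt_pi_sub_Gamma_add_one :
    HasDerivAt (fun s : ℂ => Gamma (s + 1/2) / (Real.sqrt Real.pi : ℂ) - Gamma (s + 1))
      (-2 * Real.log 2) 0 := by
  have hhalf := HasDerivAt.comp_add_const 0 (1/2 : ℂ)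
    (by rw [zero_add]; exact hasDerivAt_Gamma_one_half)
  have hone := HasDerivAt.comp_add_const 0 (1 : ℂ) (by rw [zero_add]; exact hasDerivAt_Gamma_one)
  refine ((hhalf.div_const (Real.sqrt Real.pi : ℂ)).sub hone).congr_deriv ?_
  rw [ofReal_log zero_le_two, neg_mul, neg_div, mul_div_cancel_left₀ _ sqrt_pi_ne_zero]
  push_cast
  ring

/-- There exists a function `h`, holomorphic on the half-plane `{s : Re s > −1/2}`, such that
`h(s) = Γ(s + 1/2)/(4s√π) − Γ(s)/4` for every `s ≠ 0` in that half-plane, and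
`h(0) = −(ln 2)/2`. -/
theorem stmt1 :
    ∃ h : ℂ → ℂ, DifferentiableOn ℂ h {s : ℂ | -1/2 < s.re} ∧
      (∀ s : ℂ, -1/2 < s.re → s ≠ 0 →
        h s = Complex.Gamma (s + 1/2) / (4 * s * (Real.sqrt Real.pi : ℂ))
              - Complex.Gamma s / 4) ∧
      h 0 = -(Real.log 2) / 2 := by
  have hU : {s : ℂ | -1/2 < s.re} ∈ nhds 0 :=
    (isOpen_lt continuous_const continuous_re).mem_nhds (by norm_num)
  obtain ⟨q, hq, hqs, hq0⟩ := exists_differentiableOn_eq_div_sub hU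
    differentiableOn_Gamma_add_half_div_sqrt_pi_sub_Gamma_add_one
    Gamma_add_half_div_sqrt_pi_sub_Gamma_add_one_zero
    hasDerivAt_Gamma_add_half_div_sqrt_pi_sub_Gamma_add_one
  refine ⟨fun s => q s / 4, hq.div_const 4, fun s hs hs0 => ?_, by simp only [hq0]; ring⟩
  simp only [hqs s hs hs0, Gamma_add_one s hs0, sub_zero]
  field_simp
end

section
/- Let ψ : ℝ → ℝ be a bounded measurable function with ψ(u) = 0 for u ∉ [1/3, 2/3]. Then for every s ∈ ℂ the double integral F₁(s) = ∫_0^∞ ∫_0^∞ t^{s−1} ψ(u) Σ_{n=1}^∞ e^{2λ_n u} erfc(u/√t + λ_n√t) du dt (with t^{s−1} = exp((s−1) log t)) converges absolutely, and F₁ is an entire function of s. -/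
open Real MeasureTheory Set Filter

noncomputable def erfc (x : ℝ) : ℝ :=
  (2 / Real.sqrt π) * ∫ ξ in Set.Ioi x, Real.exp (-ξ ^ 2)

/-!
Since `erfc x ≤ 2 e^{-x²}` for `x ≥ 0` and `(u/√t + λ√t)² = u²/t + 2λu + λ²t`, the `n`-th term
of the series is at most `2 e^{-u²/t} e^{-tλ_n²}`, so the series is at most `2 e^{-u²/t} Θ(t)`.
On the support `u ≥ 1/3` of `ψ` this is `≤ 2C t^{-k} e^{-1/(9t)}` for `t ≤ 1`, and for `t ≥ 1`
it is `≤ const · e^{-λ_0² t}` because `λ_n ≥ λ_0`. This bound decays faster than any power of `t`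
at `0` and at `∞`, so `t^{Re s - 1}` times it is integrable for every `s`; since
`|log t| t^{σ-1} ≤ t^{σ₀-3} + t^{σ₀+1}` for `|σ - σ₀| ≤ 1`, it also dominates the `s`-derivative
locally uniformly, and differentiation under the integral sign shows that `F₁` is entire.
-/

open scoped Nat

lemma abs_log_mul_rpow_le {t x y : ℝ} (ht : 0 < t) (hxy : |x - y| ≤ 1) :
    |log t| * t ^ x ≤ t ^ (y - 2) + t ^ (y + 2) := by
  obtain ⟨hlo, hhi⟩ := abs_le.1 hxy
  rcases le_or_gt t 1 with h1 | h1
  · have hlog : |log t| * t ≤ 1 := by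
      simpa [abs_mul, abs_of_pos ht] using (abs_log_mul_self_lt t ht h1).le
    calc |log t| * t ^ x = |log t| * t * t ^ (x - 1) := by
          rw [rpow_sub_one ht.ne']; field_simp
      _ ≤ 1 * t ^ (y - 2) :=
          mul_le_mul hlog (rpow_le_rpow_of_exponent_ge ht h1 (by linarith)) (by positivity)
            zero_le_one
      _ ≤ t ^ (y - 2) + t ^ (y + 2) := by
          rw [one_mul]; exact le_add_of_nonneg_right (by positivity)
  · calc |log t| * t ^ x ≤ t * t ^ x := by
          gcongr
          rw [abs_of_nonneg (log_nonneg h1.le)]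
          exact log_le_self ht.le
      _ = t ^ (x + 1) := by rw [rpow_add_one ht.ne']; ring
      _ ≤ t ^ (y + 2) := rpow_le_rpow_of_exponent_le h1.le (by linarith)
      _ ≤ t ^ (y - 2) + t ^ (y + 2) := le_add_of_nonneg_left (by positivity)

lemma norm_ofReal_cpow_sub_one {t : ℝ} (ht : 0 < t) (s : ℂ) :
    ‖(t : ℂ) ^ (s - 1)‖ = t ^ (s.re - 1) := by
  rw [Complex.norm_cpow_eq_rpow_re_of_pos ht, Complex.sub_re, Complex.one_re]

section CpowIntegral

variable {X E : Type*} [MeasurableSpace X] {μ : Measure X} [NormedAddCommGroup E]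
  [NormedSpace ℂ E] {τ : X → ℝ} {g : X → E}

lemma integrable_ofReal_cpow_smul (hτm : Measurable τ) (hτ : ∀ᵐ x ∂μ, 0 < τ x)
    (hg : AEStronglyMeasurable g μ) {s : ℂ}
    (hint : Integrable (fun x => τ x ^ (s.re - 1) * ‖g x‖) μ) :
    Integrable (fun x => (τ x : ℂ) ^ (s - 1) • g x) μ := by
  have hcpow : Measurable fun x => (τ x : ℂ) ^ (s - 1) := by fun_prop
  refine hint.mono' (hcpow.aestronglyMeasurable.smul hg) ?_
  filter_upwards [hτ] with x hx
  rw [norm_smul, norm_ofReal_cpow_sub_one hx]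

lemma differentiable_integral_ofReal_cpow_smul (hτm : Measurable τ) (hτ : ∀ᵐ x ∂μ, 0 < τ x)
    (hg : AEStronglyMeasurable g μ) (hint : ∀ a : ℝ, Integrable (fun x => τ x ^ a * ‖g x‖) μ) :
    Differentiable ℂ fun s : ℂ => ∫ x, (τ x : ℂ) ^ (s - 1) • g x ∂μ := by
  intro s₀
  have hF (s : ℂ) := integrable_ofReal_cpow_smul hτm hτ hg (hint (s.re - 1))
  refine (hasDerivAt_integral_of_dominated_loc_of_deriv_le
    (F' := fun s x => ((τ x : ℂ) ^ (s - 1) * Complex.log (τ x) * 1) • g x)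
    (bound := fun x => (τ x ^ (s₀.re - 1 - 2) + τ x ^ (s₀.re - 1 + 2)) * ‖g x‖)
    (Metric.ball_mem_nhds s₀ one_pos) (.of_forall fun s => (hF s).aestronglyMeasurable) (hF s₀)
    ((by fun_prop : Measurable fun x => (τ x : ℂ) ^ (s₀ - 1) * Complex.log (τ x) * 1)
      |>.aestronglyMeasurable.smul hg) ?_ ?_ ?_).2.differentiableAt
  · filter_upwards [hτ] with x hx s hs
    have hre : |(s.re - 1) - (s₀.re - 1)| ≤ 1 := by
      simpa using (Complex.abs_re_le_norm (s - s₀)).trans (mem_ball_iff_norm.1 hs).le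
    rw [norm_smul, norm_mul, norm_mul, norm_one, mul_one, norm_ofReal_cpow_sub_one hx,
      ← Complex.ofReal_log hx.le, Complex.norm_real, Real.norm_eq_abs, mul_comm (τ x ^ _)]
    gcongr
    exact abs_log_mul_rpow_le hx hre
  · simp_rw [add_mul]
    exact (hint _).add (hint _)
  · filter_upwards [hτ] with x hx s _
    exact (((hasDerivAt_id' s).sub_const 1).const_cpow
      (Or.inl (Complex.ofReal_ne_zero.2 hx.ne'))).smul_const (g x)

end CpowIntegral

noncomputable def decayBound (A k c B b t : ℝ) : ℝ :=
  if t ≤ 1 then A * t ^ (-k) * exp (-c / t) else B * exp (-b * t)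

lemma exp_neg_div_le {c t : ℝ} (hc : 0 < c) (ht : 0 < t) (m : ℕ) :
    exp (-c / t) ≤ m ! * (t / c) ^ m := by
  have h := pow_div_factorial_le_exp (x := c / t) (by positivity) m
  calc exp (-c / t) = (exp (c / t))⁻¹ := by rw [neg_div, exp_neg]
    _ ≤ ((c / t) ^ m / m !)⁻¹ := inv_anti₀ (by positivity) h
    _ = m ! * (t / c) ^ m := by rw [inv_div, div_pow, div_pow]; field_simp

lemma integrableOn_rpow_mul_exp_neg_div (a : ℝ) {c : ℝ} (hc : 0 < c) :
    IntegrableOn (fun t => t ^ a * exp (-c / t)) (Ioc 0 1) := by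
  obtain ⟨m, hm⟩ := exists_nat_gt (-1 - a)
  have hpow : IntegrableOn (fun t : ℝ => t ^ (a + m)) (Ioc 0 1) := by
    rw [← intervalIntegrable_iff_integrableOn_Ioc_of_le zero_le_one]
    exact intervalIntegral.intervalIntegrable_rpow' (by linarith)
  refine (hpow.const_mul (m ! / c ^ m)).mono' (by fun_prop) ?_
  filter_upwards [ae_restrict_mem measurableSet_Ioc] with t ht
  have ht0 : 0 < t := ht.1
  calc ‖t ^ a * exp (-c / t)‖ = t ^ a * exp (-c / t) := norm_of_nonneg (by positivity)
    _ ≤ t ^ a * (m ! * (t / c) ^ m) := by gcongr; exact exp_neg_div_le hc ht0 m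
    _ = m ! / c ^ m * t ^ (a + m) := by rw [rpow_add_natCast ht0.ne', div_pow]; ring

lemma integrableOn_rpow_mul_exp_neg_mul (a : ℝ) {b : ℝ} (hb : 0 < b) :
    IntegrableOn (fun t => t ^ a * exp (-b * t)) (Ioi 1) := by
  have h := (integrableOn_rpow_mul_exp_neg_mul_rpow (s := max a 0)
    ((neg_one_lt_zero).trans_le (le_max_right a 0)) one_pos hb).mono_set
    (Ioi_subset_Ioi zero_le_one)
  simp only [rpow_one] at h
  refine h.mono' (by fun_prop) ?_
  filter_upwards [ae_restrict_mem measurableSet_Ioi] with t ht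
  have ht0 : 0 < t := zero_lt_one.trans ht
  calc ‖t ^ a * exp (-b * t)‖ = t ^ a * exp (-b * t) := norm_of_nonneg (by positivity)
    _ ≤ t ^ max a 0 * exp (-b * t) := by gcongr; exacts [le_of_lt ht, le_max_left a 0]

lemma integrableOn_rpow_mul_decayBound (a A k B : ℝ) {c b : ℝ} (hc : 0 < c) (hb : 0 < b) :
    IntegrableOn (fun t => t ^ a * decayBound A k c B b t) (Ioi 0) := by
  rw [← Ioc_union_Ioi_eq_Ioi zero_le_one]
  refine IntegrableOn.union ?_ ?_
  · refine IntegrableOn.congr_fun ((integrableOn_rpow_mul_exp_neg_div (a - k) hc).const_mul A)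
      (fun t ⟨ht, ht1⟩ => ?_) measurableSet_Ioc
    simp only [decayBound, if_pos ht1]
    rw [sub_eq_add_neg, rpow_add ht]
    ring
  · refine IntegrableOn.congr_fun ((integrableOn_rpow_mul_exp_neg_mul a hb).const_mul B)
      (fun t ht => ?_) measurableSet_Ioi
    simp only [decayBound, if_neg (not_le.2 (mem_Ioi.1 ht))]
    ring

lemma integrable_exp_neg_sq : Integrable fun ξ : ℝ => exp (-ξ ^ 2) := by
  simpa using integrable_exp_neg_mul_sq one_pos

lemma erfc_nonneg (x : ℝ) : 0 ≤ erfc x :=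
  mul_nonneg (by positivity) (setIntegral_nonneg measurableSet_Ioi fun _ _ => (exp_pos _).le)

lemma erfc_antitone : Antitone erfc := fun _ _ hab =>
  mul_le_mul_of_nonneg_left (setIntegral_mono_set integrable_exp_neg_sq.integrableOn
    (.of_forall fun _ => (exp_pos _).le) (.of_forall fun _ h => hab.trans_lt h)) (by positivity)

@[fun_prop]
lemma measurable_erfc : Measurable erfc := erfc_antitone.measurable

lemma erfc_le_two_mul_exp_neg_sq {x : ℝ} (hx : 0 ≤ x) : erfc x ≤ 2 * exp (-x ^ 2) := by
  have hshift : Integrable fun ξ => exp (-x ^ 2) * exp (-(ξ - x) ^ 2) :=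
    (integrable_exp_neg_sq.comp_sub_right x).const_mul _
  have htail : ∫ ξ in Ioi x, exp (-ξ ^ 2) ≤ exp (-x ^ 2) * √π :=
    calc ∫ ξ in Ioi x, exp (-ξ ^ 2)
        ≤ ∫ ξ in Ioi x, exp (-x ^ 2) * exp (-(ξ - x) ^ 2) := by
          refine setIntegral_mono_on integrable_exp_neg_sq.integrableOn hshift.integrableOn
            measurableSet_Ioi fun ξ hξ => ?_
          rw [← exp_add, exp_le_exp]
          -- `ξ² ≥ x² + (ξ - x)²` for `ξ ≥ x ≥ 0`
          nlinarith [mem_Ioi.1 hξ]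
      _ ≤ ∫ ξ, exp (-x ^ 2) * exp (-(ξ - x) ^ 2) :=
          setIntegral_le_integral hshift (.of_forall fun _ => by positivity)
      _ = exp (-x ^ 2) * √π := by
          rw [integral_const_mul, integral_sub_right_eq_self (fun ξ => exp (-ξ ^ 2)) x]
          simpa using integral_gaussian 1
  calc erfc x ≤ 2 / √π * (exp (-x ^ 2) * √π) := mul_le_mul_of_nonneg_left htail (by positivity)
    _ = 2 * exp (-x ^ 2) := by field_simp

lemma sq_div_sqrt_add_mul_sqrt {t : ℝ} (ht : 0 < t) (u c : ℝ) :
    (u / √t + c * √t) ^ 2 = u ^ 2 / t + 2 * c * u + c ^ 2 * t := by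
  have hsq := sq_sqrt ht.le
  have hne := (sqrt_pos.2 ht).ne'
  field_simp
  rw [hsq]
  ring

lemma exp_mul_erfc_le {t u c : ℝ} (ht : 0 < t) (hu : 0 ≤ u) (hc : 0 ≤ c) :
    exp (2 * c * u) * erfc (u / √t + c * √t) ≤ 2 * exp (-u ^ 2 / t) * exp (-t * c ^ 2) :=
  calc exp (2 * c * u) * erfc (u / √t + c * √t)
      ≤ exp (2 * c * u) * (2 * exp (-(u / √t + c * √t) ^ 2)) := by
        gcongr
        exact erfc_le_two_mul_exp_neg_sq (by positivity)
    _ = 2 * exp (-u ^ 2 / t) * exp (-t * c ^ 2) := by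
        rw [mul_left_comm, ← exp_add, mul_assoc 2 (exp (-u ^ 2 / t)), ← exp_add,
          sq_div_sqrt_add_mul_sqrt ht]
        ring_nf

lemma tsum_exp_neg_mul_sq_le {l : ℕ → ℝ} {b t : ℝ} (hb : 0 ≤ b) (hl : ∀ n, b ≤ l n)
    (hsum₁ : Summable fun n => exp (-l n ^ 2)) (hsum : Summable fun n => exp (-t * l n ^ 2))
    (ht : 1 ≤ t) :
    ∑' n, exp (-t * l n ^ 2) ≤ (∑' n, exp (-l n ^ 2)) * exp (b ^ 2) * exp (-b ^ 2 * t) := by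
  rw [← tsum_mul_right, ← tsum_mul_right]
  refine hsum.tsum_le_tsum (fun n => ?_) ((hsum₁.mul_right _).mul_right _)
  rw [← exp_add, ← exp_add, exp_le_exp]
  nlinarith [mul_nonneg (sub_nonneg.2 ht) (sub_nonneg.2 (pow_le_pow_left₀ hb (hl n) 2))]

noncomputable def erfcSeries (l : ℕ → ℝ) (t u : ℝ) : ℝ :=
  ∑' n, exp (2 * l n * u) * erfc (u / √t + l n * √t)

lemma erfcSeries_nonneg (l : ℕ → ℝ) (t u : ℝ) : 0 ≤ erfcSeries l t u :=
  tsum_nonneg fun _ => mul_nonneg (exp_pos _).le (erfc_nonneg _)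

lemma measurable_erfcSeries (l : ℕ → ℝ) : Measurable fun p : ℝ × ℝ => erfcSeries l p.1 p.2 :=
  Measurable.tsum fun _ => by fun_prop

lemma erfcSeries_le {l : ℕ → ℝ} {t u : ℝ} (hl : ∀ n, 0 ≤ l n)
    (hsum : Summable fun n => exp (-t * l n ^ 2)) (ht : 0 < t) (hu : 0 ≤ u) :
    erfcSeries l t u ≤ 2 * exp (-u ^ 2 / t) * ∑' n, exp (-t * l n ^ 2) := by
  have hle n := exp_mul_erfc_le ht hu (hl n)
  rw [erfcSeries, ← tsum_mul_left]
  have hterm_nonneg n : 0 ≤ exp (2 * l n * u) * erfc (u / √t + l n * √t) :=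
    mul_nonneg (exp_pos _).le (erfc_nonneg _)
  exact ((hsum.mul_left _).of_nonneg_of_le hterm_nonneg hle).tsum_le_tsum hle (hsum.mul_left _)

lemma erfcSeries_le_decayBound {l : ℕ → ℝ} (hl0 : 0 < l 0) (hl : ∀ n, l 0 ≤ l n)
    (hsum : ∀ t : ℝ, 0 < t → Summable fun n => exp (-t * l n ^ 2)) {C k : ℝ}
    (hΘ : ∀ t : ℝ, 0 < t → t ≤ 1 → ∑' n, exp (-t * l n ^ 2) ≤ C * t ^ (-k))
    {t u : ℝ} (ht : 0 < t) (hu : 1 / 3 ≤ u) :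
    erfcSeries l t u ≤
      decayBound (2 * C) k (1 / 9) (2 * (∑' n, exp (-l n ^ 2)) * exp (l 0 ^ 2)) (l 0 ^ 2) t := by
  refine (erfcSeries_le (fun n => hl0.le.trans (hl n)) (hsum t ht) ht (by linarith)).trans ?_
  unfold decayBound
  split_ifs with ht1
  · calc 2 * exp (-u ^ 2 / t) * ∑' n, exp (-t * l n ^ 2)
        ≤ 2 * exp (-(1 / 9) / t) * (C * t ^ (-k)) := by
          gcongr
          · nlinarith
          · exact hΘ t ht ht1
      _ = 2 * C * t ^ (-k) * exp (-(1 / 9) / t) := by ring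
  · have hsum₁ : Summable fun n => exp (-l n ^ 2) := by simpa using hsum 1 one_pos
    calc 2 * exp (-u ^ 2 / t) * ∑' n, exp (-t * l n ^ 2)
        ≤ 2 * 1 * ((∑' n, exp (-l n ^ 2)) * exp (l 0 ^ 2) * exp (-l 0 ^ 2 * t)) := by
          gcongr
          · exact exp_le_one_iff.2 (div_nonpos_of_nonpos_of_nonneg (by nlinarith) ht.le)
          · exact tsum_exp_neg_mul_sq_le hl0.le hl hsum₁ (hsum t ht) (not_le.1 ht1).le
      _ = _ := by ring

lemma integrable_rpow_mul_abs_mul_erfcSeries {l : ℕ → ℝ} (hl0 : 0 < l 0) (hl : ∀ n, l 0 ≤ l n)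
    (hsum : ∀ t : ℝ, 0 < t → Summable fun n => exp (-t * l n ^ 2)) {C k : ℝ}
    (hΘ : ∀ t : ℝ, 0 < t → t ≤ 1 → ∑' n, exp (-t * l n ^ 2) ≤ C * t ^ (-k))
    {ψ : ℝ → ℝ} (hψm : Measurable ψ) {M : ℝ} (hM : ∀ u, |ψ u| ≤ M)
    (hψ0 : ∀ u : ℝ, u ∉ Icc (1 / 3 : ℝ) (2 / 3) → ψ u = 0) (a : ℝ) :
    Integrable (fun p : ℝ × ℝ => p.1 ^ a * (|ψ p.2| * erfcSeries l p.1 p.2))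
      (volume.restrict (Ioi 0 ×ˢ Ioi 0)) := by
  set B := 2 * (∑' n, exp (-l n ^ 2)) * exp (l 0 ^ 2)
  set W := decayBound (2 * C) k (1 / 9) B (l 0 ^ 2)
  set χ := (Icc (1 / 3 : ℝ) (2 / 3)).indicator fun _ => M
  have hW := integrableOn_rpow_mul_decayBound a (2 * C) k B
    (by norm_num : (0 : ℝ) < 1 / 9) (by positivity : 0 < l 0 ^ 2)
  have hχ : IntegrableOn χ (Ioi 0) :=
    ((integrableOn_const measure_Icc_lt_top.ne).integrable_indicator measurableSet_Icc).integrableOn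
  have hprod := Integrable.mul_prod hW hχ
  rw [Measure.prod_restrict, ← Measure.volume_eq_prod] at hprod
  have hmeas : Measurable fun p : ℝ × ℝ => p.1 ^ a * (|ψ p.2| * erfcSeries l p.1 p.2) := by
    have := measurable_erfcSeries l
    fun_prop
  refine hprod.mono' hmeas.aestronglyMeasurable ?_
  filter_upwards [ae_restrict_mem (measurableSet_Ioi.prod measurableSet_Ioi)] with ⟨t, u⟩ htu
  have ht : 0 < t := htu.1
  have hψS : |ψ u| * erfcSeries l t u ≤ W t * χ u := by
    by_cases hu : u ∈ Icc (1 / 3 : ℝ) (2 / 3)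
    · rw [show χ u = M from indicator_of_mem hu _, mul_comm (W t)]
      exact mul_le_mul (hM u) (erfcSeries_le_decayBound hl0 hl hsum hΘ ht hu.1)
        (erfcSeries_nonneg l t u) ((abs_nonneg _).trans (hM u))
    · rw [hψ0 u hu, show χ u = 0 from indicator_of_notMem hu _]
      simp
  rw [norm_of_nonneg (by have := erfcSeries_nonneg l t u; positivity), mul_assoc]
  exact mul_le_mul_of_nonneg_left hψS (rpow_nonneg ht.le a)

theorem stmt14_general (l : ℕ → ℝ) (hl0 : 0 < l 0) (hl : ∀ n, l 0 ≤ l n)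
    (hsum : ∀ t : ℝ, 0 < t → Summable fun n => Real.exp (-t * (l n)^2))
    (C k : ℝ)
    (hΘ : ∀ t : ℝ, 0 < t → t ≤ 1 → (∑' n, Real.exp (-t * (l n)^2)) ≤ C * t ^ (-k))
    (ψ : ℝ → ℝ) (hψm : Measurable ψ) (hψb : ∃ M : ℝ, ∀ u, |ψ u| ≤ M)
    (hψ0 : ∀ u : ℝ, u ∉ Set.Icc (1/3 : ℝ) (2/3) → ψ u = 0) :
    (∀ s : ℂ, IntegrableOn
        (fun p : ℝ × ℝ => (p.1 : ℂ) ^ (s - 1) * ((ψ p.2 : ℂ) *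
          ((∑' n, Real.exp (2 * l n * p.2) *
            erfc (p.2 / Real.sqrt p.1 + l n * Real.sqrt p.1) : ℝ) : ℂ)))
        (Set.Ioi 0 ×ˢ Set.Ioi 0)) ∧
    Differentiable ℂ (fun s : ℂ => ∫ p in Set.Ioi (0:ℝ) ×ˢ Set.Ioi (0:ℝ),
        (p.1 : ℂ) ^ (s - 1) * ((ψ p.2 : ℂ) *
          ((∑' n, Real.exp (2 * l n * p.2) *
            erfc (p.2 / Real.sqrt p.1 + l n * Real.sqrt p.1) : ℝ) : ℂ))) := by
  obtain ⟨M, hM⟩ := hψb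
  have hpos : ∀ᵐ p ∂(volume.restrict (Ioi (0 : ℝ) ×ˢ Ioi (0 : ℝ))), 0 < p.1 :=
    (ae_restrict_mem (measurableSet_Ioi.prod measurableSet_Ioi)).mono fun _ hp => hp.1
  have hg : Measurable fun p : ℝ × ℝ => (ψ p.2 : ℂ) * (erfcSeries l p.1 p.2 : ℂ) := by
    have := measurable_erfcSeries l
    fun_prop
  have hint (a : ℝ) : Integrable
      (fun p : ℝ × ℝ => p.1 ^ a * ‖(ψ p.2 : ℂ) * (erfcSeries l p.1 p.2 : ℂ)‖)
      (volume.restrict (Ioi 0 ×ˢ Ioi 0)) := by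
    simpa [abs_of_nonneg (erfcSeries_nonneg l _ _)] using
      integrable_rpow_mul_abs_mul_erfcSeries hl0 hl hsum hΘ hψm hM hψ0 a
  exact ⟨fun s => integrable_ofReal_cpow_smul measurable_fst hpos hg.aestronglyMeasurable
      (hint _), differentiable_integral_ofReal_cpow_smul measurable_fst hpos
      hg.aestronglyMeasurable hint⟩

/-- Lemma A.3. Let `(λ_n)` be positive reals bounded below by `λ_0 > 0` with
`Θ(t) = Σ_n e^{−tλ_n²}` convergent for all `t > 0` and `Θ(t) ≤ C t^{−k}` for `0 < t ≤ 1`.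
Let `ψ : ℝ → ℝ` be bounded measurable, vanishing outside `[1/3, 2/3]`. Then for every
`s ∈ ℂ` the double integral
`F₁(s) = ∫_0^∞ ∫_0^∞ t^{s−1} ψ(u) Σ_n e^{2λ_n u} erfc(u/√t + λ_n√t) du dt`
converges absolutely, and `F₁` is an entire function of `s`. -/
theorem stmt14 (l : ℕ → ℝ) (hl0 : 0 < l 0) (hl : ∀ n, l 0 ≤ l n)
    (hsum : ∀ t : ℝ, 0 < t → Summable fun n => Real.exp (-t * (l n)^2))
    (C k : ℝ) (hC : 0 < C) (hk : 0 < k)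
    (hΘ : ∀ t : ℝ, 0 < t → t ≤ 1 → (∑' n, Real.exp (-t * (l n)^2)) ≤ C * t ^ (-k))
    (ψ : ℝ → ℝ) (hψm : Measurable ψ) (hψb : ∃ M : ℝ, ∀ u, |ψ u| ≤ M)
    (hψ0 : ∀ u : ℝ, u ∉ Set.Icc (1/3 : ℝ) (2/3) → ψ u = 0) :
    (∀ s : ℂ, IntegrableOn
        (fun p : ℝ × ℝ => (p.1 : ℂ) ^ (s - 1) * ((ψ p.2 : ℂ) *
          ((∑' n, Real.exp (2 * l n * p.2) *
            erfc (p.2 / Real.sqrt p.1 + l n * Real.sqrt p.1) : ℝ) : ℂ)))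
        (Set.Ioi 0 ×ˢ Set.Ioi 0)) ∧
    Differentiable ℂ (fun s : ℂ => ∫ p in Set.Ioi (0:ℝ) ×ˢ Set.Ioi (0:ℝ),
        (p.1 : ℂ) ^ (s - 1) * ((ψ p.2 : ℂ) *
          ((∑' n, Real.exp (2 * l n * p.2) *
            erfc (p.2 / Real.sqrt p.1 + l n * Real.sqrt p.1) : ℝ) : ℂ))) :=
  stmt14_general l hl0 hl hsum C k hΘ ψ hψm hψb hψ0
end
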